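/- Let S_h = A ∩ B_h(x₀) where A ⊂ ℝⁿ is a cone with vertex x₀ satisfying p·(x-x₀) ≤ -δ₀|x-x₀| on A. Let f, g : ℝⁿ → ℂ with |f(x)| ≤ A₀ |x - x₀|^B on S_h for constants A₀, B > 0, and g ∈ L^q(S_h) with 1/p' + 1/q = 1, p' ∈ (1,∞). Then for ξ with Re ξ = τ p, τ > 0: | ∫_{S_h} e^{ξ·(x-x₀)} f(x) g(x) dx | ≤ A₀ σ(S^{n-1})^{1/p'} (δ₀ p' τ)^{-B - n/p'} γ(Bp'+n, δ₀ p' τ h)^{1/p'} ‖g‖_{L^q(S_h)}. -/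

import Mathlib

open MeasureTheory Real
open scoped RealInnerProductSpace

/-- The lower incomplete Gamma function `γ(s, x) = ∫_0^x t^(s-1) e^(-t) dt`. -/
noncomputable def lowerIncompleteGamma (s x : ℝ) : ℝ :=
  ∫ t in Set.Ioc (0 : ℝ) x, t ^ (s - 1) * Real.exp (-t)

/-- The surface measure of the unit sphere `S^(n-1)` in `ℝⁿ`. -/
noncomputable def sphereSurface (n : ℕ) : ℝ :=
  n * (MeasureTheory.volume (Metric.ball (0 : EuclideanSpace ℝ (Fin n)) 1)).toReal

/-! On the cone `Re (ξ·(x - x₀)) = τ ⟪p, x - x₀⟫ ≤ -δ₀ τ |x - x₀|`, so with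
`w x = e^{-δ₀ p' τ |x - x₀|} |x - x₀|^{B p'}` the integrand is bounded by `A₀ w^{1/p'} |g|`.
Hölder's inequality with exponents `p', q` reduces the claim to bounding `∫_{S_h} w` by the
integral of `w` over the whole ball, which in polar coordinates is
`σ(S^{n-1}) ∫_0^h r^{Bp' + n - 1} e^{-δ₀ p' τ r} dr`, an incomplete Gamma integral after the
substitution `t = δ₀ p' τ r`. -/

open Set Metric

section Holder

variable {α : Type*} [MeasurableSpace α] {μ : Measure α}

lemma memLp_ofReal_of_integrable_rpow {F : α → ℝ} (hF : ∀ x, 0 ≤ F x) {r : ℝ} (hr : 0 < r)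
    (hi : Integrable (fun x => F x ^ r) μ) : MemLp F (ENNReal.ofReal r) μ := by
  have hF_meas : AEStronglyMeasurable F μ := by
    refine ((hi.aemeasurable.pow_const (1 / r)).congr (.of_forall fun x => ?_)).aestronglyMeasurable
    simp only [← rpow_mul (hF x), mul_one_div_cancel hr.ne', rpow_one]
  have hr0 : ENNReal.ofReal r ≠ 0 := by simpa using hr
  refine (memLp_norm_rpow_iff hF_meas hr0 ENNReal.ofReal_ne_top).mp ?_
  rw [ENNReal.div_self hr0 ENNReal.ofReal_ne_top, memLp_one_iff_integrable]
  refine hi.congr (.of_forall fun x => ?_)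
  simp [ENNReal.toReal_ofReal hr.le, Real.norm_of_nonneg (hF x)]

lemma memLp_rpow_one_div_of_integrable {φ : α → ℝ} (hφ : ∀ x, 0 ≤ φ x) {p : ℝ} (hp : 0 < p)
    (hi : Integrable φ μ) : MemLp (fun x => φ x ^ (1 / p)) (ENNReal.ofReal p) μ := by
  refine memLp_ofReal_of_integrable_rpow (fun x => rpow_nonneg (hφ x) _) hp (hi.congr ?_)
  exact .of_forall fun x => by simp only [← rpow_mul (hφ x), one_div_mul_cancel hp.ne', rpow_one]

variable {p q : ℝ} {φ ψ : α → ℝ}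

lemma integrable_rpow_one_div_mul (hpq : p.HolderConjugate q) (hφ : ∀ x, 0 ≤ φ x)
    (hψ : ∀ x, 0 ≤ ψ x) (hφi : Integrable φ μ) (hψi : Integrable (fun x => ψ x ^ q) μ) :
    Integrable (fun x => φ x ^ (1 / p) * ψ x) μ :=
  have := hpq.ennrealOfReal
  (memLp_rpow_one_div_of_integrable hφ hpq.pos hφi).integrable_mul
    (memLp_ofReal_of_integrable_rpow hψ hpq.symm.pos hψi)

lemma integral_rpow_one_div_mul_le (hpq : p.HolderConjugate q) (hφ : ∀ x, 0 ≤ φ x)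
    (hψ : ∀ x, 0 ≤ ψ x) (hφi : Integrable φ μ) (hψi : Integrable (fun x => ψ x ^ q) μ) :
    ∫ x, φ x ^ (1 / p) * ψ x ∂μ ≤ (∫ x, φ x ∂μ) ^ (1 / p) * (∫ x, ψ x ^ q ∂μ) ^ (1 / q) := by
  have h := integral_mul_le_Lp_mul_Lq_of_nonneg hpq
    (.of_forall fun x => rpow_nonneg (hφ x) _) (.of_forall hψ)
    (memLp_rpow_one_div_of_integrable hφ hpq.pos hφi)
    (memLp_ofReal_of_integrable_rpow hψ hpq.symm.pos hψi)
  simpa only [← rpow_mul (hφ _), one_div_mul_cancel hpq.pos.ne', rpow_one] using h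

end Holder

lemma integral_Ioc_rpow_mul_exp_neg_mul {s a h : ℝ} (ha : 0 < a) (hh : 0 ≤ h) :
    ∫ y in Ioc 0 h, y ^ (s - 1) * exp (-(a * y)) = a ^ (-s) * lowerIncompleteGamma s (a * h) := by
  have hsub := intervalIntegral.mul_integral_comp_mul_left (a := 0) (b := h) (c := a)
    (f := fun t => t ^ (s - 1) * exp (-t))
  rw [mul_zero, intervalIntegral.integral_of_le hh,
    intervalIntegral.integral_of_le (by positivity)] at hsub
  rw [lowerIncompleteGamma, ← hsub, ← integral_const_mul, ← integral_const_mul]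
  refine setIntegral_congr_fun measurableSet_Ioc fun y hy => ?_
  have hpow : a ^ (-s) * a * a ^ (s - 1) = 1 := by
    rw [← rpow_add_one ha.ne', ← rpow_add ha]
    ring_nf
    exact rpow_zero a
  rw [mul_rpow ha.le hy.1.le]
  linear_combination (-(y ^ (s - 1) * exp (-(a * y)))) * hpow

lemma integral_ball_exp_neg_mul_norm_mul_rpow {n : ℕ} [NeZero n] (x₀ : EuclideanSpace ℝ (Fin n))
    {a c h : ℝ} (ha : 0 < a) (hh : 0 ≤ h) :
    ∫ x in ball x₀ h, exp (-(a * ‖x - x₀‖)) * ‖x - x₀‖ ^ c =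
      sphereSurface n * a ^ (-(c + n)) * lowerIncompleteGamma (c + n) (a * h) := by
  set G : ℝ → ℝ := (Iio h).indicator fun r => exp (-(a * r)) * r ^ c
  have hball : ∫ x in ball x₀ h, exp (-(a * ‖x - x₀‖)) * ‖x - x₀‖ ^ c = ∫ x, G ‖x - x₀‖ := by
    rw [← integral_indicator measurableSet_ball]
    rfl
  have hradial : ∫ y in Ioi 0, y ^ (n - 1) • G y =
      ∫ y in Ioc 0 h, y ^ (c + n - 1) * exp (-(a * y)) := by
    rw [integral_Ioc_eq_integral_Ioo, ← inter_eq_self_of_subset_right Ioo_subset_Ioi_self,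
      ← setIntegral_indicator measurableSet_Ioo]
    refine setIntegral_congr_fun measurableSet_Ioi fun y (hy : 0 < y) => ?_
    by_cases hyh : y < h
    · have hn : ((n - 1 : ℕ) : ℝ) = n - 1 := by rw [Nat.cast_sub NeZero.one_le, Nat.cast_one]
      rw [indicator_of_mem (show y ∈ Ioo 0 h from ⟨hy, hyh⟩), smul_eq_mul, ← rpow_natCast, hn,
        show G y = _ from indicator_of_mem (show y ∈ Iio h from hyh) _,
        show c + n - 1 = (n - 1) + c by ring, rpow_add hy]
      ring
    · simp [G, hyh]
  rw [hball, integral_sub_right_eq_self (fun x => G ‖x‖), integral_fun_norm_addHaar,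
    finrank_euclideanSpace_fin, hradial, integral_Ioc_rpow_mul_exp_neg_mul ha hh, sphereSurface,
    nsmul_eq_mul, smul_eq_mul, measureReal_def, mul_assoc, mul_assoc]

lemma exp_neg_mul_mul_rpow_mul_rpow_one_div {a c p r : ℝ} (hp : p ≠ 0) (hr : 0 ≤ r) :
    (exp (-(a * r)) * r ^ (c * p)) ^ (1 / p) = exp (-(a / p * r)) * r ^ c := by
  rw [mul_rpow (exp_pos _).le (rpow_nonneg hr _), ← exp_mul, ← rpow_mul hr]
  congr 2 <;> field_simp

section Cone

variable {n : ℕ} {ξ : Fin n → ℂ} {τ : ℝ} {p x₀ x : EuclideanSpace ℝ (Fin n)}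

lemma re_sum_mul_sub_eq_inner (hξ : ∀ i, (ξ i).re = τ * p i) :
    (∑ i, ξ i * ((x i - x₀ i : ℝ) : ℂ)).re = τ * ⟪p, x - x₀⟫ := by
  simp only [Complex.re_sum, Complex.mul_re, Complex.ofReal_re, Complex.ofReal_im, mul_zero,
    sub_zero, hξ, PiLp.inner_apply, PiLp.sub_apply, RCLike.inner_apply, conj_trivial,
    Finset.mul_sum]
  exact Finset.sum_congr rfl fun i _ => by ring

lemma norm_cexp_sum_mul_sub_le {δ₀ : ℝ} (hτ : 0 ≤ τ) (hξ : ∀ i, (ξ i).re = τ * p i)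
    (hx : ⟪p, x - x₀⟫ ≤ -δ₀ * ‖x - x₀‖) :
    ‖Complex.exp (∑ i, ξ i * ((x i - x₀ i : ℝ) : ℂ))‖ ≤ exp (-(δ₀ * τ * ‖x - x₀‖)) := by
  rw [Complex.norm_exp, re_sum_mul_sub_eq_inner hξ]
  exact exp_le_exp.mpr (by nlinarith [mul_le_mul_of_nonneg_left hx hτ])

lemma norm_cexp_sum_mul_sub_mul_mul_le {δ₀ A₀ B p' : ℝ} {u v : ℂ} (hτ : 0 ≤ τ) (hp' : p' ≠ 0)
    (hξ : ∀ i, (ξ i).re = τ * p i) (hx : ⟪p, x - x₀⟫ ≤ -δ₀ * ‖x - x₀‖)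
    (hu : ‖u‖ ≤ A₀ * ‖x - x₀‖ ^ B) :
    ‖Complex.exp (∑ i, ξ i * ((x i - x₀ i : ℝ) : ℂ)) * u * v‖ ≤
      A₀ * ((exp (-(δ₀ * p' * τ * ‖x - x₀‖)) * ‖x - x₀‖ ^ (B * p')) ^ (1 / p') * ‖v‖) := by
  rw [exp_neg_mul_mul_rpow_mul_rpow_one_div hp' (norm_nonneg _),
    show δ₀ * p' * τ / p' = δ₀ * τ by field_simp, norm_mul, norm_mul]
  calc _ ≤ exp (-(δ₀ * τ * ‖x - x₀‖)) * (A₀ * ‖x - x₀‖ ^ B) * ‖v‖ := by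
        gcongr
        exact norm_cexp_sum_mul_sub_le hτ hξ hx
    _ = _ := by ring

end Cone

lemma lowerIncompleteGamma_nonneg (s x : ℝ) : 0 ≤ lowerIncompleteGamma s x :=
  setIntegral_nonneg measurableSet_Ioc fun t ht => by have := ht.1; positivity

lemma sphereSurface_nonneg (n : ℕ) : 0 ≤ sphereSurface n := by
  unfold sphereSurface
  positivity

lemma integrableOn_exp_neg_mul_norm_mul_rpow {E : Type*} [NormedAddCommGroup E]
    [MeasurableSpace E] [OpensMeasurableSpace E] [ProperSpace E] (μ : Measure E)
    [IsFiniteMeasureOnCompacts μ] (x₀ : E) (a : ℝ) {c : ℝ} (hc : 0 ≤ c) (h : ℝ) :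
    IntegrableOn (fun x => exp (-(a * ‖x - x₀‖)) * ‖x - x₀‖ ^ c) (ball x₀ h) μ := by
  have hcont : Continuous fun x : E => exp (-(a * ‖x - x₀‖)) * ‖x - x₀‖ ^ c := by
    fun_prop (disch := exact hc)
  exact (hcont.continuousOn.integrableOn_compact (isCompact_closedBall x₀ h)).mono_set
    ball_subset_closedBall

lemma setIntegral_exp_neg_mul_norm_mul_rpow_le {n : ℕ} [NeZero n]
    {x₀ : EuclideanSpace ℝ (Fin n)} {S : Set (EuclideanSpace ℝ (Fin n))} {a c h : ℝ}
    (hS : S ⊆ ball x₀ h) (ha : 0 < a) (hc : 0 ≤ c) (hh : 0 ≤ h) :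
    ∫ x in S, exp (-(a * ‖x - x₀‖)) * ‖x - x₀‖ ^ c ≤
      sphereSurface n * a ^ (-(c + n)) * lowerIncompleteGamma (c + n) (a * h) := by
  rw [← integral_ball_exp_neg_mul_norm_mul_rpow x₀ ha hh]
  exact setIntegral_mono_set (integrableOn_exp_neg_mul_norm_mul_rpow _ x₀ a hc h)
    (.of_forall fun x => by positivity) hS.eventuallyLE

theorem cone_holder_estimate_general (n : ℕ) (hn : n = 2 ∨ n = 3)
    (x₀ p : EuclideanSpace ℝ (Fin n)) (δ₀ : ℝ) (hδ₀ : 0 < δ₀)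
    (A : Set (EuclideanSpace ℝ (Fin n))) (hAmeas : MeasurableSet A)
    (hhalf : ∀ x ∈ A, ⟪p, x - x₀⟫ ≤ -δ₀ * ‖x - x₀‖)
    (h τ : ℝ) (hh : 0 < h) (hτ : 0 < τ)
    (ξ : Fin n → ℂ) (hξ : ∀ i, (ξ i).re = τ * p i)
    (f g : EuclideanSpace ℝ (Fin n) → ℂ)
    (A₀ B : ℝ) (hA₀ : 0 < A₀) (hB : 0 < B)
    (hf : ∀ x ∈ A ∩ Metric.ball x₀ h, ‖f x‖ ≤ A₀ * ‖x - x₀‖ ^ B)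
    (p' q : ℝ) (hp' : 1 < p') (hpq : 1 / p' + 1 / q = 1)
    (hg : IntegrableOn (fun x => ‖g x‖ ^ q) (A ∩ Metric.ball x₀ h))
    (hint : IntegrableOn
      (fun x => Complex.exp (∑ i, ξ i * ((x i - x₀ i : ℝ) : ℂ)) * f x * g x)
      (A ∩ Metric.ball x₀ h)) :
    ‖∫ x in A ∩ Metric.ball x₀ h,
        Complex.exp (∑ i, ξ i * ((x i - x₀ i : ℝ) : ℂ)) * f x * g x‖ ≤
      A₀ * sphereSurface n ^ (1 / p') * (δ₀ * p' * τ) ^ (-B - n / p') *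
        lowerIncompleteGamma (B * p' + n) (δ₀ * p' * τ * h) ^ (1 / p') *
        (∫ x in A ∩ Metric.ball x₀ h, ‖g x‖ ^ q) ^ (1 / q) := by
  have : NeZero n := ⟨by omega⟩
  have hpq' : p'.HolderConjugate q := Real.holderConjugate_iff.mpr ⟨hp', by simpa using hpq⟩
  set S := A ∩ ball x₀ h
  set a := δ₀ * p' * τ
  set w : EuclideanSpace ℝ (Fin n) → ℝ := fun x => exp (-(a * ‖x - x₀‖)) * ‖x - x₀‖ ^ (B * p')
  have ha : 0 < a := by positivity
  have hw_nonneg : ∀ x, 0 ≤ w x := fun x => by positivity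
  have hw_int : IntegrableOn w S :=
    (integrableOn_exp_neg_mul_norm_mul_rpow _ x₀ a (by positivity) h).mono_set inter_subset_right
  have hpoint : ∀ x ∈ S, ‖Complex.exp (∑ i, ξ i * ((x i - x₀ i : ℝ) : ℂ)) * f x * g x‖ ≤
      A₀ * (w x ^ (1 / p') * ‖g x‖) := fun x hx =>
    norm_cexp_sum_mul_sub_mul_mul_le hτ.le hpq'.ne_zero hξ (hhalf x hx.1) (hf x hx)
  calc _ ≤ ∫ x in S, ‖Complex.exp (∑ i, ξ i * ((x i - x₀ i : ℝ) : ℂ)) * f x * g x‖ :=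
        norm_integral_le_integral_norm _
    _ ≤ ∫ x in S, A₀ * (w x ^ (1 / p') * ‖g x‖) :=
        setIntegral_mono_on hint.norm ((integrable_rpow_one_div_mul hpq' hw_nonneg
          (fun x => norm_nonneg _) hw_int hg).const_mul A₀) (hAmeas.inter measurableSet_ball) hpoint
    _ = A₀ * ∫ x in S, w x ^ (1 / p') * ‖g x‖ := integral_const_mul _ _
    _ ≤ A₀ * ((∫ x in S, w x) ^ (1 / p') * (∫ x in S, ‖g x‖ ^ q) ^ (1 / q)) := by
        gcongr
        exact integral_rpow_one_div_mul_le hpq' hw_nonneg (fun x => norm_nonneg _) hw_int hg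
    _ ≤ A₀ * ((sphereSurface n * a ^ (-(B * p' + n)) * lowerIncompleteGamma (B * p' + n) (a * h))
          ^ (1 / p') * (∫ x in S, ‖g x‖ ^ q) ^ (1 / q)) := by
        gcongr A₀ * (?_ ^ _ * _)
        exact setIntegral_exp_neg_mul_norm_mul_rpow_le inter_subset_right ha (by positivity) hh.le
    _ = _ := by
        rw [mul_rpow (mul_nonneg (sphereSurface_nonneg n) (by positivity))
            (lowerIncompleteGamma_nonneg _ _),
          mul_rpow (sphereSurface_nonneg n) (by positivity), ← rpow_mul ha.le,
          show -(B * p' + n) * (1 / p') = -B - n / p' by field_simp; ring]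
        ring

theorem cone_holder_estimate (n : ℕ) (hn : n = 2 ∨ n = 3)
    (x₀ p : EuclideanSpace ℝ (Fin n)) (hp : ‖p‖ = 1) (δ₀ : ℝ) (hδ₀ : 0 < δ₀)
    (A : Set (EuclideanSpace ℝ (Fin n))) (hAmeas : MeasurableSet A)
    (hcone : ∀ x ∈ A, ∀ t : ℝ, 0 < t → x₀ + t • (x - x₀) ∈ A)
    (hhalf : ∀ x ∈ A, ⟪p, x - x₀⟫ ≤ -δ₀ * ‖x - x₀‖)
    (h τ : ℝ) (hh : 0 < h) (hτ : 0 < τ)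
    (ξ : Fin n → ℂ) (hξ : ∀ i, (ξ i).re = τ * p i)
    (f g : EuclideanSpace ℝ (Fin n) → ℂ)
    (A₀ B : ℝ) (hA₀ : 0 < A₀) (hB : 0 < B)
    (hf : ∀ x ∈ A ∩ Metric.ball x₀ h, ‖f x‖ ≤ A₀ * ‖x - x₀‖ ^ B)
    (p' q : ℝ) (hp' : 1 < p') (hpq : 1 / p' + 1 / q = 1)
    (hg : IntegrableOn (fun x => ‖g x‖ ^ q) (A ∩ Metric.ball x₀ h))
    (hint : IntegrableOn
      (fun x => Complex.exp (∑ i, ξ i * ((x i - x₀ i : ℝ) : ℂ)) * f x * g x)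
      (A ∩ Metric.ball x₀ h)) :
    ‖∫ x in A ∩ Metric.ball x₀ h,
        Complex.exp (∑ i, ξ i * ((x i - x₀ i : ℝ) : ℂ)) * f x * g x‖ ≤
      A₀ * sphereSurface n ^ (1 / p') * (δ₀ * p' * τ) ^ (-B - n / p') *
        lowerIncompleteGamma (B * p' + n) (δ₀ * p' * τ * h) ^ (1 / p') *
        (∫ x in A ∩ Metric.ball x₀ h, ‖g x‖ ^ q) ^ (1 / q) :=
  cone_holder_estimate_general n hn x₀ p δ₀ hδ₀ A hAmeas hhalf h τ hh hτ ξ hξ f g A₀ B hA₀ hB hf p'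
    q hp' hpq hg hint
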